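/- arXiv:2010.07382 — 5 statements merged into one kernel-verified Lean document; each statement's English description precedes it below -/
import Mathlib

section
/- For any two conditional probability mass functions f(·|x) and q(·|x,z^n) on a finite set Y, let δ = max_{y∈Y} ln(f(y|x)/q(y|x,z^n)) be the worst-case redundancy, and let h_q(x,z^n) = argmax_y q(y|x,z^n) and h_MAP(x) = argmax_y f(y|x). Then the misclassification gap satisfies (1 - f(h_q(x,z^n)|x)) - (1 - f(h_MAP(x)|x)) ≤ e^δ - 1. -/
/-!
Every ratio `f y / q y` is at most `e^δ`, so `f ≤ e^δ q` pointwise. Summing this over `y ≠ h_q`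
gives `1 - f h_q ≤ e^δ (1 - q h_q)`, while `f y ≤ e^δ q y ≤ e^δ q h_q` for every `y`; adding the
two yields `f y - f h_q ≤ e^δ - 1`, in particular for `y = h_MAP`.
-/

open Finset

theorem le_exp_mul_of_log_div_le {a b δ : ℝ} (hb : 0 ≤ b) (hab : 0 < a → 0 < b)
    (hlog : Real.log (a / b) ≤ δ) : a ≤ Real.exp δ * b := by
  rcases le_or_gt a 0 with ha | ha
  · exact ha.trans (mul_nonneg (Real.exp_pos δ).le hb)
  · have hb' := hab ha
    calc a = (a / b) * b := by field_simp
      _ = Real.exp (Real.log (a / b)) * b := by rw [Real.exp_log (div_pos ha hb')]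
      _ ≤ Real.exp δ * b := by gcongr

theorem le_exp_sup'_log_div_mul {Y : Type*} [Fintype Y] [Nonempty Y] {f q : Y → ℝ}
    (hq_nonneg : ∀ y, 0 ≤ q y) (hq_pos : ∀ y, 0 < f y → 0 < q y) (y : Y) :
    f y ≤ Real.exp (univ.sup' univ_nonempty fun y => Real.log (f y / q y)) * q y :=
  le_exp_mul_of_log_div_le (hq_nonneg y) (hq_pos y)
    (le_sup' (fun y => Real.log (f y / q y)) (mem_univ y))

theorem apply_sub_apply_argmax_le_of_le_const_mul {Y : Type*} [Fintype Y] {f q : Y → ℝ} {c : ℝ}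
    (hc : 0 ≤ c) (hfq : ∀ y, f y ≤ c * q y) (hf_sum : ∑ y, f y = 1) (hq_sum : ∑ y, q y = 1)
    {a : Y} (ha : ∀ y, q y ≤ q a) (b : Y) :
    f b - f a ≤ c - 1 := by
  classical
  have hrest : 1 - f a ≤ c * (1 - q a) := by
    have hf_rest : ∑ y ∈ univ.erase a, f y = 1 - f a := by
      rw [← hf_sum, sum_erase_eq_sub (mem_univ a)]
    have hq_rest : ∑ y ∈ univ.erase a, q y = 1 - q a := by
      rw [← hq_sum, sum_erase_eq_sub (mem_univ a)]
    rw [← hf_rest, ← hq_rest, mul_sum]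
    exact sum_le_sum fun y _ => hfq y
  have hb : f b ≤ c * q a := (hfq b).trans (mul_le_mul_of_nonneg_left (ha b) hc)
  linarith

theorem redundancy_misclassification_bound_general
    {Y : Type*} [Fintype Y] [Nonempty Y]
    (f q : Y → ℝ)
    (hf_sum : ∑ y, f y = 1)
    (hq_nonneg : ∀ y, 0 ≤ q y) (hq_sum : ∑ y, q y = 1)
    (hq_pos : ∀ y, 0 < f y → 0 < q y)
    (δ : ℝ)
    (hδ : δ = Finset.univ.sup' Finset.univ_nonempty (fun y => Real.log (f y / q y)))
    (yq : Y) (hyq : ∀ y, q y ≤ q yq)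
    (yMAP : Y) :
    (1 - f yq) - (1 - f yMAP) ≤ Real.exp δ - 1 := by
  subst hδ
  have hgap := apply_sub_apply_argmax_le_of_le_const_mul (Real.exp_pos _).le
    (le_exp_sup'_log_div_mul hq_nonneg hq_pos) hf_sum hq_sum hyq yMAP
  linarith

/-- **Redundancy-based misclassification bound (Lemma 1 of the paper).**
`f` and `q` are probability mass functions on the finite alphabet `Y`
(`f = f(·|x)`, `q = q(·|x,zⁿ)`), with `q` strictly positive wherever `f` is positive.
Let `δ = max_{y∈Y} ln (f y / q y)` (given here via the hypothesis `hδ` stating that `δ`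
is the least upper bound of the log-ratios), let `yq` be a maximizer of `q`
(the decision `h_q(x,zⁿ)`) and `yMAP` a maximizer of `f` (the MAP decision `h_MAP(x)`).
Then `(1 - f yq) - (1 - f yMAP) ≤ e^δ - 1`. -/
theorem redundancy_misclassification_bound
    {Y : Type*} [Fintype Y] [Nonempty Y]
    (f q : Y → ℝ)
    (hf_nonneg : ∀ y, 0 ≤ f y) (hf_sum : ∑ y, f y = 1)
    (hq_nonneg : ∀ y, 0 ≤ q y) (hq_sum : ∑ y, q y = 1)
    (hq_pos : ∀ y, 0 < f y → 0 < q y)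
    (δ : ℝ)
    (hδ : δ = Finset.univ.sup' Finset.univ_nonempty (fun y => Real.log (f y / q y)))
    (yq : Y) (hyq : ∀ y, q y ≤ q yq)
    (yMAP : Y) (hyMAP : ∀ y, f y ≤ f yMAP) :
    (1 - f yq) - (1 - f yMAP) ≤ Real.exp δ - 1 :=
  redundancy_misclassification_bound_general f q hf_sum hq_nonneg hq_sum hq_pos δ hδ yq hyq yMAP
end

section
/- For a nonempty model class M of probability distributions on a finite set Y with Z_M = Σ_{y∈Y} sup_{p∈M} p(y) finite, the normalized maximum likelihood distribution q_NML(y) = sup_{p∈M} p(y) / Z_M achieves maximal regret exactly ln Z_M, i.e., sup_{p∈M} max_{y∈Y} ln(p(y)/q_NML(y)) = ln Z_M. -/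
/-! For every `p ∈ M` and `y`, `p y ≤ p̂ y := sup_{p ∈ M} p y`, so `p y / q_NML y ≤ Z`, which bounds
the regret of `q_NML` by `ln Z`. Conversely, if `q` has maximal regret `R` then `p y ≤ q y · exp R`
for all `p ∈ M`, hence `p̂ y ≤ q y · exp R`; summing over `y` gives `Z ≤ exp R` for every
probability vector `q` (Shtarkov's bound). -/

open Real

namespace Real

theorem log_div_div_le_log {a b c : ℝ} (ha : 0 ≤ a) (hab : a ≤ b) (hc : 1 ≤ c) :
    log (a / (b / c)) ≤ log c := by
  rcases ha.eq_or_lt with rfl | ha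
  · simpa using log_nonneg hc
  have hb : 0 < b := ha.trans_le hab
  have hc0 : 0 < c := one_pos.trans_le hc
  refine log_le_log (by positivity) ?_
  rw [div_div_eq_mul_div, div_le_iff₀ hb, mul_comm c]
  exact mul_le_mul_of_nonneg_right hab hc0.le

theorem le_mul_exp_of_log_div_le {a b R : ℝ} (ha : 0 < a) (hb : 0 < b) (h : log (a / b) ≤ R) :
    a ≤ b * exp R := by
  rwa [log_le_iff_le_exp (div_pos ha hb), div_le_iff₀' hb] at h

end Real

section MaxLikelihood

variable {Y : Type*} [Fintype Y] (M : Set (Y → ℝ))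

noncomputable def maxLikelihood (y : Y) : ℝ := ⨆ p : M, (p : Y → ℝ) y

variable {M}

theorem bddAbove_range_apply_of_sum_eq_one (hM_nonneg : ∀ p ∈ M, ∀ y, 0 ≤ p y)
    (hM_sum : ∀ p ∈ M, ∑ y, p y = 1) (y : Y) :
    BddAbove (Set.range fun p : M => (p : Y → ℝ) y) := by
  refine ⟨1, ?_⟩
  rintro _ ⟨⟨p, hp⟩, rfl⟩
  calc p y ≤ ∑ y', p y' := Finset.single_le_sum (fun i _ => hM_nonneg p hp i) (Finset.mem_univ y)
    _ = 1 := hM_sum p hp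

theorem apply_le_maxLikelihood (hM_nonneg : ∀ p ∈ M, ∀ y, 0 ≤ p y)
    (hM_sum : ∀ p ∈ M, ∑ y, p y = 1) (p : Y → ℝ) (hp : p ∈ M) (y : Y) :
    p y ≤ maxLikelihood M y :=
  le_ciSup (bddAbove_range_apply_of_sum_eq_one hM_nonneg hM_sum y) ⟨p, hp⟩

theorem one_le_sum_maxLikelihood (hM_ne : M.Nonempty) (hM_nonneg : ∀ p ∈ M, ∀ y, 0 ≤ p y)
    (hM_sum : ∀ p ∈ M, ∑ y, p y = 1) :
    1 ≤ ∑ y, maxLikelihood M y := by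
  obtain ⟨p, hp⟩ := hM_ne
  rw [← hM_sum p hp]
  exact Finset.sum_le_sum fun y _ => apply_le_maxLikelihood hM_nonneg hM_sum p hp y

/-- Shtarkov's bound. `hq_pos` excludes the junk value `log (p y / 0) = 0`. -/
theorem sum_maxLikelihood_le_exp_mul_sum (hM_ne : M.Nonempty) {q : Y → ℝ} {R : ℝ}
    (hq_nonneg : ∀ y, 0 ≤ q y) (hq_pos : ∀ p ∈ M, ∀ y, 0 < p y → 0 < q y)
    (hR : ∀ p ∈ M, ∀ y, log (p y / q y) ≤ R) :
    ∑ y, maxLikelihood M y ≤ exp R * ∑ y, q y := by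
  have : Nonempty M := hM_ne.to_subtype
  rw [Finset.mul_sum]
  refine Finset.sum_le_sum fun y _ => ciSup_le fun ⟨p, hp⟩ => ?_
  rw [mul_comm]
  rcases le_or_gt (p y) 0 with hpy | hpy
  · exact hpy.trans (mul_nonneg (hq_nonneg y) (exp_pos R).le)
  · exact le_mul_exp_of_log_div_le hpy (hq_pos p hp y hpy) (hR p hp y)

variable (M) in
noncomputable def nml (y : Y) : ℝ := maxLikelihood M y / ∑ y', maxLikelihood M y'

theorem nml_nonneg (hM_ne : M.Nonempty) (hM_nonneg : ∀ p ∈ M, ∀ y, 0 ≤ p y)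
    (hM_sum : ∀ p ∈ M, ∑ y, p y = 1) (y : Y) : 0 ≤ nml M y := by
  obtain ⟨p, hp⟩ := hM_ne
  exact div_nonneg ((hM_nonneg p hp y).trans (apply_le_maxLikelihood hM_nonneg hM_sum p hp y))
    (zero_le_one.trans (one_le_sum_maxLikelihood ⟨p, hp⟩ hM_nonneg hM_sum))

theorem nml_pos_of_pos (hM_nonneg : ∀ p ∈ M, ∀ y, 0 ≤ p y) (hM_sum : ∀ p ∈ M, ∑ y, p y = 1)
    (p : Y → ℝ) (hp : p ∈ M) (y : Y) (hpy : 0 < p y) : 0 < nml M y :=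
  div_pos (hpy.trans_le (apply_le_maxLikelihood hM_nonneg hM_sum p hp y))
    (one_pos.trans_le (one_le_sum_maxLikelihood ⟨p, hp⟩ hM_nonneg hM_sum))

theorem sum_nml (hM_ne : M.Nonempty) (hM_nonneg : ∀ p ∈ M, ∀ y, 0 ≤ p y)
    (hM_sum : ∀ p ∈ M, ∑ y, p y = 1) : ∑ y, nml M y = 1 := by
  unfold nml
  rw [← Finset.sum_div, div_self]
  exact (one_pos.trans_le (one_le_sum_maxLikelihood hM_ne hM_nonneg hM_sum)).ne'

theorem log_div_nml_le (hM_nonneg : ∀ p ∈ M, ∀ y, 0 ≤ p y) (hM_sum : ∀ p ∈ M, ∑ y, p y = 1)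
    (p : Y → ℝ) (hp : p ∈ M) (y : Y) :
    log (p y / nml M y) ≤ log (∑ y', maxLikelihood M y') :=
  log_div_div_le_log (hM_nonneg p hp y) (apply_le_maxLikelihood hM_nonneg hM_sum p hp y)
    (one_le_sum_maxLikelihood ⟨p, hp⟩ hM_nonneg hM_sum)

end MaxLikelihood

section Regret

variable {Y : Type*} [Fintype Y] [Nonempty Y] (M : Set (Y → ℝ))

noncomputable def maxRegret (q : Y → ℝ) : ℝ :=
  ⨆ p : M, Finset.univ.sup' Finset.univ_nonempty fun y => log ((p : Y → ℝ) y / q y)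

variable {M}

theorem maxRegret_le [Nonempty M] {q : Y → ℝ} {b : ℝ}
    (h : ∀ p ∈ M, ∀ y, log (p y / q y) ≤ b) : maxRegret M q ≤ b :=
  ciSup_le fun p => Finset.sup'_le _ _ fun y _ => h p p.2 y

theorem log_div_le_maxRegret {q : Y → ℝ} {b : ℝ} (h : ∀ p ∈ M, ∀ y, log (p y / q y) ≤ b)
    (p : Y → ℝ) (hp : p ∈ M) (y : Y) : log (p y / q y) ≤ maxRegret M q := by
  have hbdd : BddAbove (Set.range fun p : M =>
      Finset.univ.sup' Finset.univ_nonempty fun y => log ((p : Y → ℝ) y / q y)) :=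
    ⟨b, Set.forall_mem_range.2 fun p => Finset.sup'_le _ _ fun y _ => h p p.2 y⟩
  exact le_ciSup_of_le hbdd ⟨p, hp⟩ (Finset.le_sup' (fun y => log (p y / q y)) (Finset.mem_univ y))

theorem maxRegret_nml (hM_ne : M.Nonempty) (hM_nonneg : ∀ p ∈ M, ∀ y, 0 ≤ p y)
    (hM_sum : ∀ p ∈ M, ∑ y, p y = 1) :
    maxRegret M (nml M) = log (∑ y, maxLikelihood M y) := by
  have : Nonempty M := hM_ne.to_subtype
  have hregret := log_div_nml_le hM_nonneg hM_sum
  refine (maxRegret_le hregret).antisymm ?_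
  rw [log_le_iff_le_exp (one_pos.trans_le (one_le_sum_maxLikelihood hM_ne hM_nonneg hM_sum))]
  calc ∑ y, maxLikelihood M y
      ≤ exp (maxRegret M (nml M)) * ∑ y, nml M y :=
        sum_maxLikelihood_le_exp_mul_sum hM_ne (nml_nonneg hM_ne hM_nonneg hM_sum)
          (nml_pos_of_pos hM_nonneg hM_sum) (log_div_le_maxRegret hregret)
    _ = exp (maxRegret M (nml M)) := by rw [sum_nml hM_ne hM_nonneg hM_sum, mul_one]

end Regret

/-- **The NML distribution attains maximal regret `ln Z_M` (stochastic complexity).**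
`M` is a nonempty family of probability mass functions on the finite alphabet `Y`,
`Z = Σ_{y} sup_{p∈M} p y` (finite, as each `p y ≤ 1`), and the normalized maximum
likelihood distribution is `qNML y = (sup_{p∈M} p y) / Z`. Then the maximal regret of
`qNML` relative to `M` equals `ln Z`:
`sup_{p∈M} max_{y} ln (p y / qNML y) = ln Z`. -/
theorem nml_maximal_regret_eq_log_Z
    {Y : Type*} [Fintype Y] [Nonempty Y]
    (M : Set (Y → ℝ)) (hM_ne : M.Nonempty)
    (hM_nonneg : ∀ p ∈ M, ∀ y, 0 ≤ p y) (hM_sum : ∀ p ∈ M, ∑ y, p y = 1)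
    (Z : ℝ) (hZ : Z = ∑ y, ⨆ p : M, (p : Y → ℝ) y)
    (qNML : Y → ℝ) (hqNML : ∀ y, qNML y = (⨆ p : M, (p : Y → ℝ) y) / Z) :
    (⨆ p : M, Finset.univ.sup' Finset.univ_nonempty
        (fun y => Real.log ((p : Y → ℝ) y / qNML y))) = Real.log Z := by
  subst hZ
  obtain rfl : qNML = nml M := funext hqNML
  exact maxRegret_nml hM_ne hM_nonneg hM_sum
end

section
/- Leakage bound via pointwise differences: enumerating Y = {y₁,…,y_K} and letting θ_k ∈ Θ' achieve sup_{θ∈Θ'} p_θ(y_k|x) for each k, the exponentiated maximal leakage satisfies exp(L(Θ')) = Σ_{k=1}^K p_{θ_k}(y_k|x) ≤ 1 + Σ_{k=2}^K 2 d_TV( p_{θ_k}(·|x), p_{θ₁}(·|x) ) ≤ 1 + Σ_{k=2}^K √( 2 D( p_{θ_k}(·|x) ‖ p_{θ₁}(·|x) ) ). -/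
/-!
Each supremum `sup_θ p θ (y_k)` is attained at `θ_k`, so `exp L(Θ')` is the sum of the
maximal probabilities `p_{θ_k}(y_k)`. Subtracting the probability vector `p_{θ_1}`, which sums
to `1`, leaves the differences `p_{θ_k}(y_k) - p_{θ_1}(y_k)` (zero for `k = 1`), each at most the
`ℓ¹` distance `2 d_TV(p_{θ_k}, p_{θ_1})`. The last step is Pinsker's inequality, obtained by
summing the pointwise bound `q log (q / r) ≥ (q - r) + 3 (q - r)² / (2 (q + 2r))` and applying
Cauchy–Schwarz with the weights `q + 2r`.
-/

open Finset Real

lemma sub_one_div_add_le_log {t : ℝ} (ht : 0 < t) :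
    (t - 1) / t + 3 * (t - 1) ^ 2 / (2 * t * (t + 2)) ≤ log t := by
  set g : ℝ → ℝ := fun s => log s - ((s - 1) / s + 3 * (s - 1) ^ 2 / (2 * s * (s + 2)))
  set g' : ℝ → ℝ := fun s => (s - 1) ^ 3 / (s ^ 2 * (s + 2) ^ 2)
  have hg' : ∀ s, 0 < s → HasDerivAt g (g' s) s := by
    intro s hs
    have hden : 2 * s * (s + 2) ≠ 0 := by positivity
    have h := (hasDerivAt_log hs.ne').sub
      ((((hasDerivAt_id' s).sub_const 1).div (hasDerivAt_id' s) hs.ne').add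
        ((((hasDerivAt_id' s).sub_const 1).pow 2).const_mul 3 |>.div
          (((hasDerivAt_id' s).const_mul 2).mul ((hasDerivAt_id' s).add_const 2)) hden))
    refine h.congr_deriv ?_
    simp only [g', Pi.mul_apply, Pi.pow_apply]
    field_simp
    ring
  have hg1 : g 1 = 0 := by norm_num [g]
  suffices 0 ≤ g t by simpa [g, sub_nonneg] using this
  -- `g'` has the sign of `s - 1`, so `g` is minimal at `s = 1`.
  rcases le_total 1 t with h1 | h1
  · have hmono : MonotoneOn g (Set.Ici 1) := by
      refine monotoneOn_of_hasDerivWithinAt_nonneg (f' := g') (convex_Ici 1)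
        (fun s hs => (hg' s (one_pos.trans_le hs)).continuousAt.continuousWithinAt)
        (fun s hs => ?_) (fun s hs => ?_) <;> rw [interior_Ici] at hs
      · exact (hg' s (one_pos.trans hs)).hasDerivWithinAt
      · have : 0 < s - 1 := sub_pos.mpr hs
        positivity
    simpa [hg1] using hmono Set.self_mem_Ici h1 h1
  · have hanti : AntitoneOn g (Set.Ioc 0 1) := by
      refine antitoneOn_of_hasDerivWithinAt_nonpos (f' := g') (convex_Ioc 0 1)
        (fun s hs => (hg' s hs.1).continuousAt.continuousWithinAt)
        (fun s hs => ?_) (fun s hs => ?_) <;> rw [interior_Ioc] at hs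
      · exact (hg' s hs.1).hasDerivWithinAt
      · have : (s - 1) ^ 3 ≤ 0 := Odd.pow_nonpos (by decide) (by linarith [hs.2])
        exact div_nonpos_of_nonpos_of_nonneg this (by positivity)
    simpa [hg1] using hanti ⟨ht, h1⟩ ⟨one_pos, le_rfl⟩ h1

lemma sub_add_le_mul_log_div {q r : ℝ} (hq : 0 ≤ q) (hr : 0 < r) :
    q - r + 3 / 2 * ((q - r) ^ 2 / (q + 2 * r)) ≤ q * log (q / r) := by
  rcases hq.eq_or_lt with rfl | hq
  · field_simp
    nlinarith
  have h := mul_le_mul_of_nonneg_left (sub_one_div_add_le_log (div_pos hq hr)) hq.le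
  refine Eq.trans_le ?_ h
  field_simp

theorem sum_abs_sub_le_sqrt_two_mul_sum_mul_log_div {ι : Type*} [Fintype ι] {q r : ι → ℝ}
    (hq : ∀ i, 0 ≤ q i) (hr : ∀ i, 0 < r i) (hq1 : ∑ i, q i = 1) (hr1 : ∑ i, r i = 1) :
    ∑ i, |q i - r i| ≤ √(2 * ∑ i, q i * log (q i / r i)) := by
  -- Sedrakyan's form of Cauchy–Schwarz; the weights `q + 2r` have total mass `3`.
  have hchi : (∑ i, |q i - r i|) ^ 2 / 3 ≤ ∑ i, (q i - r i) ^ 2 / (q i + 2 * r i) := by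
    have hmass : ∑ i, (q i + 2 * r i) = 3 := by
      rw [sum_add_distrib, ← mul_sum, hq1, hr1]
      norm_num
    have := sq_sum_div_le_sum_sq_div univ (fun i => |q i - r i|)
      (g := fun i => q i + 2 * r i) fun i _ => by linarith [hq i, hr i]
    simpa only [sq_abs, hmass] using this
  have hkl : 3 / 2 * ∑ i, (q i - r i) ^ 2 / (q i + 2 * r i) ≤ ∑ i, q i * log (q i / r i) := by
    have := sum_le_sum fun i (_ : i ∈ univ) => sub_add_le_mul_log_div (hq i) (hr i)
    rwa [sum_add_distrib, sum_sub_distrib, hq1, hr1, sub_self, zero_add, ← mul_sum] at this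
  exact le_sqrt_of_sq_le (by linarith)

lemma sum_apply_equiv_le_one_add_sum_abs_sub {ι Y : Type*} [Fintype ι] [DecidableEq ι]
    [Fintype Y] (e : ι ≃ Y) (q : ι → Y → ℝ) (i₀ : ι) (hq : ∑ y, q i₀ y = 1) :
    ∑ i, q i (e i) ≤ 1 + ∑ i ∈ univ.erase i₀, ∑ y, |q i y - q i₀ y| :=
  calc ∑ i, q i (e i) = ∑ i, q i₀ (e i) + ∑ i, (q i (e i) - q i₀ (e i)) := by
        rw [← sum_add_distrib]
        simp only [add_sub_cancel]
    _ = 1 + ∑ i ∈ univ.erase i₀, (q i (e i) - q i₀ (e i)) := by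
        rw [e.sum_comp (q i₀), hq, sum_erase _ (sub_self _)]
    _ ≤ 1 + ∑ i ∈ univ.erase i₀, ∑ y, |q i y - q i₀ y| := by
        gcongr with i
        exact (le_abs_self _).trans
          (single_le_sum (f := fun y => |q i y - q i₀ y|) (fun y _ => abs_nonneg _) (mem_univ (e i)))

theorem leakage_pointwise_tv_kl_bound_general
    {T : Type*} {Y : Type*} [Fintype Y] {K : ℕ} [NeZero K] (e : Fin K ≃ Y)
    (p : T → Y → ℝ)
    (hp_sum : ∀ θ, ∑ y, p θ y = 1)
    (Θ' : Set T)
    (θmax : Fin K → T) (hθmax_mem : ∀ k, θmax k ∈ Θ')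
    (hθmax : ∀ k, ∀ θ ∈ Θ', p θ (e k) ≤ p (θmax k) (e k))
    (hpos : ∀ k y, 0 < p (θmax k) y) :
    Real.exp (Real.log (∑ y, ⨆ θ : Θ', p θ y)) = ∑ k, p (θmax k) (e k) ∧
    ∑ k, p (θmax k) (e k) ≤
      1 + ∑ k ∈ Finset.univ.erase 0,
        2 * ((1/2) * ∑ y, |p (θmax k) y - p (θmax 0) y|) ∧
    (1 + ∑ k ∈ Finset.univ.erase 0,
        2 * ((1/2) * ∑ y, |p (θmax k) y - p (θmax 0) y|)) ≤
      1 + ∑ k ∈ Finset.univ.erase 0,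
        Real.sqrt (2 * ∑ y, p (θmax k) y * Real.log (p (θmax k) y / p (θmax 0) y)) := by
  have hsup : ∑ y, ⨆ θ : Θ', p θ y = ∑ k, p (θmax k) (e k) := by
    rw [← e.sum_comp]
    exact sum_congr rfl fun k _ =>
      IsMaxOn.iSup_eq (f := fun θ => p θ (e k)) (hθmax_mem k) (hθmax k)
  have htv : ∀ k, 2 * ((1 / 2) * ∑ y, |p (θmax k) y - p (θmax 0) y|) =
      ∑ y, |p (θmax k) y - p (θmax 0) y| := fun k => by ring
  simp only [htv]
  refine ⟨?_, sum_apply_equiv_le_one_add_sum_abs_sub e _ 0 (hp_sum _), ?_⟩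
  · rw [hsup, exp_log (sum_pos (fun k _ => hpos k (e k)) univ_nonempty)]
  · gcongr with k
    exact sum_abs_sub_le_sqrt_two_mul_sum_mul_log_div (fun y => (hpos k y).le) (hpos 0)
      (hp_sum _) (hp_sum _)

/-- **Leakage bound via pointwise differences (first part of the proof of Lemma 1).**
`Y = {y₁,…,y_K}` is a finite set, enumerated by an equivalence `e : Fin K ≃ Y`
(`y₁ = e 0`). `Θ'` is a nonempty parameter set indexing probability mass functions
`p θ` on `Y`, and for each `k` the supremum `sup_{θ∈Θ'} p θ (e k)` is attained at
`θmax k ∈ Θ'`. With maximal leakage `L(Θ') = ln Σ_y sup_{θ∈Θ'} p θ y`, total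
variation distance `d_TV` and KL divergence `D` (in nats), one has the chain
`exp (L(Θ')) = Σ_k p (θmax k) (e k)
  ≤ 1 + Σ_{k≠1} 2 d_TV(p (θmax k), p (θmax 1))
  ≤ 1 + Σ_{k≠1} √(2 D(p (θmax k) ‖ p (θmax 1)))`. -/
theorem leakage_pointwise_tv_kl_bound
    {T : Type*} {Y : Type*} [Fintype Y] {K : ℕ} [NeZero K] (e : Fin K ≃ Y)
    (p : T → Y → ℝ)
    (hp_nonneg : ∀ θ y, 0 ≤ p θ y) (hp_sum : ∀ θ, ∑ y, p θ y = 1)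
    (Θ' : Set T) (hΘ' : Θ'.Nonempty)
    (θmax : Fin K → T) (hθmax_mem : ∀ k, θmax k ∈ Θ')
    (hθmax : ∀ k, ∀ θ ∈ Θ', p θ (e k) ≤ p (θmax k) (e k))
    (hpos : ∀ k y, 0 < p (θmax k) y) :
    Real.exp (Real.log (∑ y, ⨆ θ : Θ', p θ y)) = ∑ k, p (θmax k) (e k) ∧
    ∑ k, p (θmax k) (e k) ≤
      1 + ∑ k ∈ Finset.univ.erase 0,
        2 * ((1/2) * ∑ y, |p (θmax k) y - p (θmax 0) y|) ∧
    (1 + ∑ k ∈ Finset.univ.erase 0,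
        2 * ((1/2) * ∑ y, |p (θmax k) y - p (θmax 0) y|)) ≤
      1 + ∑ k ∈ Finset.univ.erase 0,
        Real.sqrt (2 * ∑ y, p (θmax k) y * Real.log (p (θmax k) y / p (θmax 0) y)) :=
  leakage_pointwise_tv_kl_bound_general e p hp_sum Θ' θmax hθmax_mem hθmax hpos
end

section
/- Fisher-information bound on maximal leakage: if Θ' ⊂ ℝ^d is convex, the Fisher matrix I(θ|x) is well-defined on Θ', and θ_k = argmax_{θ∈Θ'} p_θ(y_k|x) for Y = {y₁,…,y_K}, then L(Θ') ≤ ln( 1 + Σ_{k=2}^K ‖θ_k - θ₁‖ √(σ_max(θ̃_k|x)) ), where for each k, θ̃_k = τ_k θ₁ + (1-τ_k) θ_k for some τ_k ∈ [0,1] and σ_max denotes the largest eigenvalue of the Fisher matrix. -/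
/-!
Each maximum `p (θmax k) y_k` exceeds `p (θmax 0) y_k` by at most the directional derivative
of `θ ↦ p θ y_k` at some point of the segment `[θmax 0, θmax k]` (mean value theorem). That
derivative is `p · ∂ log p`, and since `p ≤ 1` its square is at most `p (∂ log p)²`, one term
of the Fisher quadratic form, which is bounded by `σ_max` times the squared length of the
direction. Summing over `k` and using `∑ₖ p (θmax 0) y_k = 1` bounds the argument of the
logarithm.
-/

/-- The largest eigenvalue of a real symmetric positive semidefinite `d × d` matrix,
characterized as the supremum of the Rayleigh quotient over Euclidean unit vectors. -/
noncomputable def sigmaMax {d : ℕ} (M : Matrix (Fin d) (Fin d) ℝ) : ℝ :=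
  sSup {r : ℝ | ∃ v : EuclideanSpace ℝ (Fin d), ‖v‖ = 1 ∧
    r = dotProduct (fun i => v i) (M.mulVec (fun i => v i))}

open Finset Real

lemma hasFDerivWithinAt_smul_fderivWithin_log {E : Type*} [NormedAddCommGroup E]
    [NormedSpace ℝ E] {f : E → ℝ} {s : Set E} {x : E} (hf : DifferentiableWithinAt ℝ f s x)
    (hpos : ∀ t ∈ s, 0 < f t) (hx : x ∈ s) :
    HasFDerivWithinAt f (f x • fderivWithin ℝ (fun t => Real.log (f t)) s x) s x := by
  have hlog : HasFDerivWithinAt (fun t => Real.log (f t))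
      (fderivWithin ℝ (fun t => Real.log (f t)) s x) s x :=
    (hf.log (hpos x hx).ne').hasFDerivWithinAt
  have hexp := (Real.hasDerivAt_exp _).comp_hasFDerivWithinAt x hlog
  rw [Real.exp_log (hpos x hx)] at hexp
  exact hexp.congr (fun t ht => (Real.exp_log (hpos t ht)).symm) (Real.exp_log (hpos x hx)).symm

section RayleighQuotient

variable {d : ℕ}

lemma bddAbove_rayleigh_quotient (M : Matrix (Fin d) (Fin d) ℝ) :
    BddAbove {r : ℝ | ∃ v : EuclideanSpace ℝ (Fin d), ‖v‖ = 1 ∧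
      r = dotProduct (fun i => v i) (M.mulVec (fun i => v i))} := by
  have hcont : Continuous fun v : EuclideanSpace ℝ (Fin d) =>
      dotProduct (fun i => v i) (M.mulVec (fun i => v i)) := by fun_prop
  refine ((isCompact_sphere (0 : EuclideanSpace ℝ (Fin d)) 1).image hcont).bddAbove.mono ?_
  rintro r ⟨v, hv, rfl⟩
  exact ⟨v, by simpa using hv, rfl⟩

lemma dotProduct_mulVec_le_sigmaMax_mul_norm_sq (M : Matrix (Fin d) (Fin d) ℝ)
    (w : EuclideanSpace ℝ (Fin d)) :
    dotProduct (fun i => w i) (M.mulVec (fun i => w i)) ≤ sigmaMax M * ‖w‖ ^ 2 := by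
  rcases eq_or_ne w 0 with rfl | hw
  · simp
  set v := ‖w‖⁻¹ • w
  have hv : dotProduct (fun i => v i) (M.mulVec (fun i => v i)) ≤ sigmaMax M :=
    le_csSup (bddAbove_rayleigh_quotient M) ⟨v, norm_smul_inv_norm hw, rfl⟩
  have hscale : (fun i => v i) = ‖w‖⁻¹ • (fun i => w i) := rfl
  rw [hscale, Matrix.mulVec_smul, dotProduct_smul, smul_dotProduct, smul_eq_mul, smul_eq_mul,
    ← mul_assoc, ← sq, inv_pow] at hv
  rwa [inv_mul_le_iff₀ (by positivity), mul_comm] at hv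

end RayleighQuotient

section FisherMatrix

variable {d : ℕ}

lemma ContinuousLinearMap.apply_eq_sum_mul_single (L : EuclideanSpace ℝ (Fin d) →L[ℝ] ℝ)
    (v : EuclideanSpace ℝ (Fin d)) :
    L v = ∑ i, v i * L (EuclideanSpace.single i 1) := by
  conv_lhs => rw [← (EuclideanSpace.basisFun (Fin d) ℝ).sum_repr v]
  simp [map_sum]

variable {Y : Type*} [Fintype Y]

/-- With `q = p θ` and `L y` the differential of `log p · y` at `θ`, this is the Fisher
information matrix at `θ`. -/
noncomputable def fisherMatrix (q : Y → ℝ)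
    (L : Y → EuclideanSpace ℝ (Fin d) →L[ℝ] ℝ) : Matrix (Fin d) (Fin d) ℝ :=
  Matrix.of fun i j =>
    ∑ y, q y * L y (EuclideanSpace.single i 1) * L y (EuclideanSpace.single j 1)

lemma dotProduct_fisherMatrix_mulVec (q : Y → ℝ)
    (L : Y → EuclideanSpace ℝ (Fin d) →L[ℝ] ℝ) (v : EuclideanSpace ℝ (Fin d)) :
    dotProduct (fun i => v i) ((fisherMatrix q L).mulVec (fun i => v i)) =
      ∑ y, q y * L y v ^ 2 := by
  simp only [dotProduct, Matrix.mulVec, fisherMatrix, Matrix.of_apply, sq,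
    L _ |>.apply_eq_sum_mul_single v, mul_sum, sum_mul]
  refine (sum_congr rfl fun i _ => sum_comm).trans ?_
  rw [sum_comm]
  exact sum_congr rfl fun y _ => sum_congr rfl fun i _ => sum_congr rfl fun j _ => by ring

lemma abs_mul_apply_le_sqrt_sigmaMax_fisherMatrix_mul_norm (q : Y → ℝ) (hq0 : ∀ y, 0 ≤ q y)
    (hq1 : ∀ y, q y ≤ 1) (L : Y → EuclideanSpace ℝ (Fin d) →L[ℝ] ℝ) (y : Y)
    (w : EuclideanSpace ℝ (Fin d)) :
    |q y * L y w| ≤ √(sigmaMax (fisherMatrix q L)) * ‖w‖ := by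
  have hsq : (q y * L y w) ^ 2 ≤ sigmaMax (fisherMatrix q L) * ‖w‖ ^ 2 :=
    calc (q y * L y w) ^ 2 = q y * (q y * L y w ^ 2) := by ring
      _ ≤ q y * L y w ^ 2 := mul_le_of_le_one_left (mul_nonneg (hq0 y) (sq_nonneg _)) (hq1 y)
      _ ≤ ∑ y', q y' * L y' w ^ 2 :=
        single_le_sum (f := fun y' => q y' * L y' w ^ 2)
          (fun y' _ => mul_nonneg (hq0 y') (sq_nonneg _)) (mem_univ y)
      _ = dotProduct (fun i => w i) ((fisherMatrix q L).mulVec (fun i => w i)) :=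
        (dotProduct_fisherMatrix_mulVec q L w).symm
      _ ≤ sigmaMax (fisherMatrix q L) * ‖w‖ ^ 2 :=
        dotProduct_mulVec_le_sigmaMax_mul_norm_sq _ w
  calc |q y * L y w| ≤ √(sigmaMax (fisherMatrix q L) * ‖w‖ ^ 2) := Real.abs_le_sqrt hsq
    _ = √(sigmaMax (fisherMatrix q L)) * ‖w‖ := by
      rw [Real.sqrt_mul' _ (by positivity), Real.sqrt_sq (norm_nonneg w)]

lemma exists_mem_Icc_sub_le_norm_mul_sqrt_sigmaMax {s : Set (EuclideanSpace ℝ (Fin d))}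
    (hs : Convex ℝ s) {p : EuclideanSpace ℝ (Fin d) → Y → ℝ}
    (hpos : ∀ θ ∈ s, ∀ y, 0 < p θ y) (hle_one : ∀ θ ∈ s, ∀ y, p θ y ≤ 1)
    (hdiff : ∀ y, DifferentiableOn ℝ (fun θ => p θ y) s)
    {F : EuclideanSpace ℝ (Fin d) → Matrix (Fin d) (Fin d) ℝ}
    (hF : ∀ θ ∈ s,
      F θ = fisherMatrix (p θ) fun y => fderivWithin ℝ (fun t => Real.log (p t y)) s θ)
    {a b : EuclideanSpace ℝ (Fin d)} (ha : a ∈ s) (hb : b ∈ s) (y : Y) :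
    ∃ τ ∈ Set.Icc (0 : ℝ) 1,
      p b y - p a y ≤ ‖b - a‖ * √(sigmaMax (F (τ • a + (1 - τ) • b))) := by
  have hderiv : ∀ θ ∈ s, HasFDerivWithinAt (fun t => p t y)
      (p θ y • fderivWithin ℝ (fun t => Real.log (p t y)) s θ) s θ := fun θ hθ =>
    hasFDerivWithinAt_smul_fderivWithin_log (hdiff y θ hθ) (fun t ht => hpos t ht y) hθ
  obtain ⟨_, ⟨τ, σ, hτ, hσ, hτσ, rfl⟩, hmvt⟩ := domain_mvt hderiv hs ha hb
  have hmem := hs ha hb hτ hσ hτσ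
  obtain rfl : σ = 1 - τ := by linarith
  refine ⟨τ, ⟨hτ, by linarith⟩, ?_⟩
  rw [hmvt, smul_apply, smul_eq_mul, mul_comm ‖_‖, hF _ hmem]
  exact (le_abs_self _).trans <| abs_mul_apply_le_sqrt_sigmaMax_fisherMatrix_mul_norm _
    (fun y => (hpos _ hmem y).le) (hle_one _ hmem)
    (fun y' => fderivWithin ℝ (fun t => Real.log (p t y')) s _) y (b - a)

end FisherMatrix

theorem fisher_bound_on_maximal_leakage_general
    {d : ℕ} {Y : Type*} [Fintype Y] {K : ℕ} [NeZero K] (e : Fin K ≃ Y)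
    (p : EuclideanSpace ℝ (Fin d) → Y → ℝ)
    (Θ' : Set (EuclideanSpace ℝ (Fin d))) (hconv : Convex ℝ Θ')
    (hpos : ∀ θ ∈ Θ', ∀ y, 0 < p θ y) (hsum : ∀ θ ∈ Θ', ∑ y, p θ y = 1)
    (hC2 : ∀ y, ContDiffOn ℝ 2 (fun θ => p θ y) Θ')
    (FI : EuclideanSpace ℝ (Fin d) → Matrix (Fin d) (Fin d) ℝ)
    (hFI : ∀ θ ∈ Θ', ∀ i j, FI θ i j =
      ∑ y, p θ y * (fderivWithin ℝ (fun t => Real.log (p t y)) Θ' θ (WithLp.toLp 2 (Pi.single i 1))) *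
        (fderivWithin ℝ (fun t => Real.log (p t y)) Θ' θ (WithLp.toLp 2 (Pi.single j 1))))
    (θmax : Fin K → EuclideanSpace ℝ (Fin d)) (hθmax_mem : ∀ k, θmax k ∈ Θ')
    (hθmax : ∀ k, ∀ θ ∈ Θ', p θ (e k) ≤ p (θmax k) (e k)) :
    ∃ τ : Fin K → ℝ, (∀ k, τ k ∈ Set.Icc (0 : ℝ) 1) ∧
      Real.log (∑ y, ⨆ θ : Θ', p θ y) ≤
        Real.log (1 + ∑ k ∈ Finset.univ.erase 0,
          ‖θmax k - θmax 0‖ *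
            Real.sqrt (sigmaMax (FI (τ k • θmax 0 + (1 - τ k) • θmax k)))) := by
  have hle_one : ∀ θ ∈ Θ', ∀ y, p θ y ≤ 1 := fun θ hθ y =>
    hsum θ hθ ▸ single_le_sum (fun y' _ => (hpos θ hθ y').le) (mem_univ y)
  have hstep := fun k => exists_mem_Icc_sub_le_norm_mul_sqrt_sigmaMax hconv hpos
    hle_one (fun y => (hC2 y).differentiableOn two_ne_zero) (fun θ hθ => Matrix.ext (hFI θ hθ))
    (hθmax_mem 0) (hθmax_mem k) (e k)
  choose τ hτ hkey using hstep
  refine ⟨τ, hτ, ?_⟩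
  have hsup : ∀ k, ⨆ θ : Θ', p θ (e k) = p (θmax k) (e k) := fun k =>
    IsMaxOn.iSup_eq (hθmax_mem k) (isMaxOn_iff.mpr (hθmax k))
  rw [← e.sum_comp, sum_congr rfl fun k _ => hsup k]
  refine Real.log_le_log (sum_pos (fun k _ => hpos _ (hθmax_mem k) _) univ_nonempty) ?_
  calc ∑ k, p (θmax k) (e k)
      ≤ ∑ k, (p (θmax 0) (e k) + ‖θmax k - θmax 0‖ *
          √(sigmaMax (FI (τ k • θmax 0 + (1 - τ k) • θmax k)))) :=
        sum_le_sum fun k _ => by linarith [hkey k]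
    _ = 1 + ∑ k ∈ univ.erase 0, ‖θmax k - θmax 0‖ *
          √(sigmaMax (FI (τ k • θmax 0 + (1 - τ k) • θmax k))) := by
        rw [sum_add_distrib, e.sum_comp (p (θmax 0)), hsum _ (hθmax_mem 0),
          sum_erase _ (by simp)]

/-- **Fisher-information bound on maximal leakage (Lemma 1 of the paper).**
`Y = {y₁,…,y_K}` is a finite set, enumerated by `e : Fin K ≃ Y` (with `y₁ = e 0`);
`{p θ : θ ∈ Θ'}` is a family of strictly positive probability mass functions on `Y`,
twice continuously differentiable in `θ` on the convex set `Θ' ⊆ ℝ^d`, with Fisher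
information matrix `FI` (hypothesis `hFI`), and for each `k` the supremum
`sup_{θ∈Θ'} p θ (e k)` is attained at `θmax k ∈ Θ'`. Then the maximal leakage
`L(Θ') = ln Σ_y sup_{θ∈Θ'} p θ y` satisfies
`L(Θ') ≤ ln (1 + Σ_{k≠1} ‖θmax k - θmax 1‖ √(σ_max(FI θ̃_k)))`,
where `θ̃_k = τ_k • θmax 1 + (1-τ_k) • θmax k` for some `τ_k ∈ [0,1]`. -/
theorem fisher_bound_on_maximal_leakage
    {d : ℕ} {Y : Type*} [Fintype Y] {K : ℕ} [NeZero K] (e : Fin K ≃ Y)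
    (p : EuclideanSpace ℝ (Fin d) → Y → ℝ)
    (Θ' : Set (EuclideanSpace ℝ (Fin d))) (hconv : Convex ℝ Θ') (hne : Θ'.Nonempty)
    (hpos : ∀ θ ∈ Θ', ∀ y, 0 < p θ y) (hsum : ∀ θ ∈ Θ', ∑ y, p θ y = 1)
    (hC2 : ∀ y, ContDiffOn ℝ 2 (fun θ => p θ y) Θ')
    (FI : EuclideanSpace ℝ (Fin d) → Matrix (Fin d) (Fin d) ℝ)
    (hFI : ∀ θ ∈ Θ', ∀ i j, FI θ i j =
      ∑ y, p θ y * (fderivWithin ℝ (fun t => Real.log (p t y)) Θ' θ (WithLp.toLp 2 (Pi.single i 1))) *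
        (fderivWithin ℝ (fun t => Real.log (p t y)) Θ' θ (WithLp.toLp 2 (Pi.single j 1))))
    (θmax : Fin K → EuclideanSpace ℝ (Fin d)) (hθmax_mem : ∀ k, θmax k ∈ Θ')
    (hθmax : ∀ k, ∀ θ ∈ Θ', p θ (e k) ≤ p (θmax k) (e k)) :
    ∃ τ : Fin K → ℝ, (∀ k, τ k ∈ Set.Icc (0 : ℝ) 1) ∧
      Real.log (∑ y, ⨆ θ : Θ', p θ y) ≤
        Real.log (1 + ∑ k ∈ Finset.univ.erase 0,
          ‖θmax k - θmax 0‖ *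
            Real.sqrt (sigmaMax (FI (τ k • θmax 0 + (1 - τ k) • θmax k)))) :=
  fisher_bound_on_maximal_leakage_general e p Θ' hconv hpos hsum hC2 FI hFI θmax hθmax_mem hθmax
end

section
/- Well-specified performance bound: assume f(·|x) = p_{θ₀}(·|x) for some θ₀ ∈ Θ', where Θ' ⊂ ℝ^d is a convex set of diameter at most 2ρ on which the parametric family is smooth and strictly positive, with Fisher eigenvalues bounded by σ*. Then the NML hypothesis h_NML(x) = argmax_y sup_{θ∈Θ'} p_θ(y|x) satisfies (1 - f(h_NML(x)|x)) - (1 - max_y f(y|x)) ≤ 2ρ K √(σ*), where K = |Y|. -/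
/-! The NML label `yNML` has a maximum-likelihood parameter `θ₁ ∈ Θ'` whose likelihood
`p θ₁ yNML` dominates every `p θ y`, so the regret is at most `p θ₁ yNML - p θ₀ yNML`.
The directional derivative of `p · y` is `p · y` times the score, and since `p ≤ 1` its square
is at most the Fisher quadratic form, hence at most `σ* ‖w‖²`. The mean value inequality
along the segment `[θ₀, θ₁] ⊆ Θ'` then gives `p θ₁ yNML - p θ₀ yNML ≤ √σ* ‖θ₁ - θ₀‖ ≤ 2ρ√σ*`. -/

lemma bddAbove_rayleigh {d : ℕ} (M : Matrix (Fin d) (Fin d) ℝ) :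
    BddAbove {r : ℝ | ∃ v : EuclideanSpace ℝ (Fin d), ‖v‖ = 1 ∧
      r = dotProduct (fun i => v i) (M.mulVec (fun i => v i))} := by
  have hQ : Continuous fun w : EuclideanSpace ℝ (Fin d) =>
      dotProduct (fun i => w i) (M.mulVec (fun i => w i)) := by
    simp only [dotProduct, Matrix.mulVec]
    fun_prop
  refine ((isCompact_sphere (0 : EuclideanSpace ℝ (Fin d)) 1).image hQ).bddAbove.mono ?_
  rintro r ⟨w, hw, rfl⟩
  exact ⟨w, by simpa using hw, rfl⟩

lemma dotProduct_mulVec_le_sigmaMax_mul_sq {d : ℕ} (M : Matrix (Fin d) (Fin d) ℝ)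
    (v : EuclideanSpace ℝ (Fin d)) :
    dotProduct (fun i => v i) (M.mulVec (fun i => v i)) ≤ sigmaMax M * ‖v‖ ^ 2 := by
  rcases eq_or_ne v 0 with rfl | hv
  · simp
  have hv' : 0 < ‖v‖ := norm_pos_iff.mpr hv
  set u := ‖v‖⁻¹ • v
  have hu : ‖u‖ = 1 := by simp [u, norm_smul, hv'.ne']
  have hvu : (fun i => v i) = ‖v‖ • fun i => u i := by
    ext i; simp [u, hv'.ne']
  have hle : dotProduct (fun i => u i) (M.mulVec (fun i => u i)) ≤ sigmaMax M :=
    le_csSup (bddAbove_rayleigh M) ⟨u, hu, rfl⟩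
  rw [hvu, Matrix.mulVec_smul, dotProduct_smul, smul_dotProduct, smul_eq_mul, smul_eq_mul]
  nlinarith [sq_nonneg ‖v‖]

lemma apply_eq_sum_mul_apply_single {d : ℕ} (ℓ : EuclideanSpace ℝ (Fin d) →L[ℝ] ℝ)
    (v : EuclideanSpace ℝ (Fin d)) :
    ℓ v = ∑ i, v i * ℓ (WithLp.toLp 2 (Pi.single i 1)) := by
  conv_lhs => rw [← (EuclideanSpace.basisFun (Fin d) ℝ).sum_repr v]
  simp [map_sum, EuclideanSpace.basisFun_apply]

lemma dotProduct_mulVec_eq_sum_mul_sq {d : ℕ} {ι : Type*} [Fintype ι] (w : ι → ℝ)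
    (ℓ : ι → EuclideanSpace ℝ (Fin d) →L[ℝ] ℝ) (M : Matrix (Fin d) (Fin d) ℝ)
    (hM : ∀ i j, M i j = ∑ y, w y * ℓ y (WithLp.toLp 2 (Pi.single i 1)) *
      ℓ y (WithLp.toLp 2 (Pi.single j 1)))
    (v : EuclideanSpace ℝ (Fin d)) :
    dotProduct (fun i => v i) (M.mulVec (fun i => v i)) = ∑ y, w y * ℓ y v ^ 2 := by
  simp only [dotProduct, Matrix.mulVec, hM, apply_eq_sum_mul_apply_single _ v, sq,
    Finset.mul_sum, Finset.sum_mul]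
  refine (Finset.sum_congr rfl fun i _ => Finset.sum_comm).trans (Finset.sum_comm.trans ?_)
  exact Finset.sum_congr rfl fun y _ => Finset.sum_congr rfl fun i _ =>
    Finset.sum_congr rfl fun j _ => by ring

lemma fderivWithin_log_apply_of_mem_tangentConeAt {E : Type*} [NormedAddCommGroup E]
    [NormedSpace ℝ E] {f : E → ℝ} {s : Set E} {x w : E}
    (hf : DifferentiableWithinAt ℝ f s x) (hx : f x ≠ 0) (hw : w ∈ tangentConeAt ℝ s x) :
    fderivWithin ℝ (fun t => Real.log (f t)) s x w = (f x)⁻¹ * fderivWithin ℝ f s x w := by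
  have h := hf.hasFDerivWithinAt.log hx
  simpa using h.differentiableWithinAt.hasFDerivWithinAt.unique_on h hw

/-- When `s` has empty interior, `fderivWithin ℝ f s x` is determined only on the tangent cone
of `s` at `x`, so the derivative bound is assumed only in those directions. -/
theorem Convex.norm_image_sub_le_of_norm_fderivWithin_tangentConeAt_le {E F : Type*}
    [NormedAddCommGroup E] [NormedSpace ℝ E] [NormedAddCommGroup F] [NormedSpace ℝ F]
    {f : E → F} {s : Set E} {C : ℝ} (hs : Convex ℝ s) (hf : DifferentiableOn ℝ f s)
    (bound : ∀ x ∈ s, ∀ w ∈ tangentConeAt ℝ s x, ‖fderivWithin ℝ f s x w‖ ≤ C * ‖w‖)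
    {x y : E} (hx : x ∈ s) (hy : y ∈ s) : ‖f y - f x‖ ≤ C * ‖y - x‖ := by
  set γ : ℝ → E := fun t => x + t • (y - x)
  have hγ : ∀ t ∈ Set.Icc (0 : ℝ) 1, γ t ∈ s := fun t ht => hs.add_smul_sub_mem hx hy ht
  have hderiv : ∀ t ∈ Set.Icc (0 : ℝ) 1, HasDerivWithinAt (f ∘ γ)
      (fderivWithin ℝ f s (γ t) (y - x)) (Set.Icc 0 1) t := by
    intro t ht
    have hγ' : HasDerivAt γ (y - x) t := by
      simpa [γ] using ((hasDerivAt_id t).smul_const (y - x)).const_add x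
    exact (hf _ (hγ t ht)).hasFDerivWithinAt.comp_hasDerivWithinAt t hγ'.hasDerivWithinAt hγ
  have hbound : ∀ t ∈ Set.Ico (0 : ℝ) 1,
      ‖fderivWithin ℝ f s (γ t) (y - x)‖ ≤ C * ‖y - x‖ := by
    intro t ht
    have h1t : 0 < 1 - t := by linarith [ht.2]
    have hγt := hγ t (Set.Ico_subset_Icc_self ht)
    have hcone : (1 - t) • (y - x) ∈ tangentConeAt ℝ s (γ t) := by
      convert mem_tangentConeAt_of_segment_subset (hs.segment_subset hγt hy) using 1
      simp only [γ]; module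
    have := bound _ hγt _ hcone
    rw [map_smul, norm_smul, norm_smul, Real.norm_of_nonneg h1t.le, mul_left_comm] at this
    exact le_of_mul_le_mul_left this h1t
  simpa [γ] using norm_image_sub_le_of_norm_deriv_le_segment' hderiv hbound 1 (by simp)

lemma abs_fderivWithin_apply_le_sqrt_mul_norm {d : ℕ} {Y : Type*} [Fintype Y]
    {p : EuclideanSpace ℝ (Fin d) → Y → ℝ} {s : Set (EuclideanSpace ℝ (Fin d))}
    {θ : EuclideanSpace ℝ (Fin d)} (hpos : ∀ y, 0 < p θ y) (hsum : ∑ y, p θ y = 1)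
    (hdiff : ∀ y, DifferentiableWithinAt ℝ (fun t => p t y) s θ)
    {M : Matrix (Fin d) (Fin d) ℝ}
    (hM : ∀ i j, M i j =
      ∑ y, p θ y * (fderivWithin ℝ (fun t => Real.log (p t y)) s θ (WithLp.toLp 2 (Pi.single i 1))) *
        (fderivWithin ℝ (fun t => Real.log (p t y)) s θ (WithLp.toLp 2 (Pi.single j 1))))
    {σ : ℝ} (hσ : sigmaMax M ≤ σ) {w : EuclideanSpace ℝ (Fin d)}
    (hw : w ∈ tangentConeAt ℝ s θ) (y : Y) :
    |fderivWithin ℝ (fun t => p t y) s θ w| ≤ Real.sqrt σ * ‖w‖ := by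
  set score := fun z => fderivWithin ℝ (fun t => Real.log (p t z)) s θ
  have hscore : fderivWithin ℝ (fun t => p t y) s θ w = p θ y * score y w := by
    rw [fderivWithin_log_apply_of_mem_tangentConeAt (hdiff y) (hpos y).ne' hw,
      mul_inv_cancel_left₀ (hpos y).ne']
  have hfisher : ∑ z, p θ z * score z w ^ 2 ≤ σ * ‖w‖ ^ 2 := by
    rw [← dotProduct_mulVec_eq_sum_mul_sq _ score M hM w]
    exact (dotProduct_mulVec_le_sigmaMax_mul_sq M w).trans
      (mul_le_mul_of_nonneg_right hσ (sq_nonneg _))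
  have hterm : p θ y * score y w ^ 2 ≤ σ * ‖w‖ ^ 2 :=
    (Finset.single_le_sum (fun z _ => mul_nonneg (hpos z).le (sq_nonneg (score z w)))
      (Finset.mem_univ y)).trans hfisher
  have hp_le_one : p θ y ≤ 1 :=
    hsum ▸ Finset.single_le_sum (fun z _ => (hpos z).le) (Finset.mem_univ y)
  have hsq : (p θ y * score y w) ^ 2 ≤ σ * ‖w‖ ^ 2 := by
    nlinarith [mul_nonneg (hpos y).le (sq_nonneg (score y w))]
  rw [hscore, ← Real.sqrt_sq (norm_nonneg w), ← Real.sqrt_mul' _ (sq_nonneg _)]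
  exact Real.abs_le_sqrt hsq

lemma exists_mem_forall_apply_le_of_forall_iSup_le {α Y : Type*} {s : Set α} {q : α → Y → ℝ}
    (hattain : ∀ y, ∃ a ∈ s, ∀ b ∈ s, q b y ≤ q a y) {y₀ : Y}
    (hy₀ : ∀ y, (⨆ a : s, q a y) ≤ ⨆ a : s, q a y₀) :
    ∃ a ∈ s, ∀ b ∈ s, ∀ y, q b y ≤ q a y₀ := by
  have hle_iSup : ∀ y, ∀ b ∈ s, q b y ≤ ⨆ a : s, q a y := fun y b hb => by
    obtain ⟨a, -, hmax⟩ := hattain y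
    have hbdd : BddAbove (Set.range fun c : s => q c y) := ⟨q a y, by
      rintro _ ⟨c, rfl⟩; exact hmax c c.2⟩
    exact le_ciSup hbdd ⟨b, hb⟩
  obtain ⟨a, ha, hmax⟩ := hattain y₀
  have : Nonempty s := ⟨⟨a, ha⟩⟩
  exact ⟨a, ha, fun b hb y =>
    (hle_iSup y b hb).trans ((hy₀ y).trans (ciSup_le fun c => hmax c c.2))⟩

/-- **Well-specified performance bound.** `Y` is a finite set with `|Y| = K`;
`{p θ : θ ∈ Θ'}` is a smooth family of strictly positive probability mass functions
on `Y`, where `Θ' ⊆ ℝ^d` is convex of diameter at most `2ρ` and contains the true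
parameter `θ₀` (so `f(·|x) = p θ₀` and the approximation error `Δ` vanishes).
The Fisher information matrix `FI` (hypothesis `hFI`) has largest eigenvalue bounded
by `σ*` on `Θ'`, and the suprema over `Θ'` are attained. Then the NML decision
`yNML`, a maximizer of `y ↦ sup_{θ∈Θ'} p θ y`, satisfies
`(1 - p θ₀ yNML) - (1 - max_y p θ₀ y) ≤ 2ρK√(σ*)`. -/
theorem well_specified_nml_performance_bound
    {d : ℕ} {Y : Type*} [Fintype Y] [Nonempty Y]
    (p : EuclideanSpace ℝ (Fin d) → Y → ℝ)
    (Θ' : Set (EuclideanSpace ℝ (Fin d))) (hconv : Convex ℝ Θ')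
    (ρ : ℝ) (hρ : 0 < ρ)
    (hdiam : ∀ θ₁ ∈ Θ', ∀ θ₂ ∈ Θ', ‖θ₁ - θ₂‖ ≤ 2 * ρ)
    (θ₀ : EuclideanSpace ℝ (Fin d)) (hθ₀ : θ₀ ∈ Θ')
    (hpos : ∀ θ ∈ Θ', ∀ y, 0 < p θ y) (hsum : ∀ θ ∈ Θ', ∑ y, p θ y = 1)
    (hC2 : ∀ y, ContDiffOn ℝ 2 (fun θ => p θ y) Θ')
    (FI : EuclideanSpace ℝ (Fin d) → Matrix (Fin d) (Fin d) ℝ)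
    (hFI : ∀ θ ∈ Θ', ∀ i j, FI θ i j =
      ∑ y, p θ y * (fderivWithin ℝ (fun t => Real.log (p t y)) Θ' θ (WithLp.toLp 2 (Pi.single i 1))) *
        (fderivWithin ℝ (fun t => Real.log (p t y)) Θ' θ (WithLp.toLp 2 (Pi.single j 1))))
    (σstar : ℝ) (hσ : ∀ θ ∈ Θ', sigmaMax (FI θ) ≤ σstar)
    (hattain : ∀ y : Y, ∃ θ ∈ Θ', ∀ θ' ∈ Θ', p θ' y ≤ p θ y)
    (yNML : Y) (hyNML : ∀ y, (⨆ θ : Θ', p θ y) ≤ ⨆ θ : Θ', p θ yNML) :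
    (1 - p θ₀ yNML) -
        (1 - Finset.univ.sup' Finset.univ_nonempty (p θ₀)) ≤
      2 * ρ * (Fintype.card Y : ℝ) * Real.sqrt σstar := by
  obtain ⟨θ₁, hθ₁, hdom⟩ := exists_mem_forall_apply_le_of_forall_iSup_le hattain hyNML
  have hdiff : ∀ y, DifferentiableOn ℝ (fun θ => p θ y) Θ' :=
    fun y => (hC2 y).differentiableOn two_ne_zero
  have hlip : p θ₁ yNML - p θ₀ yNML ≤ Real.sqrt σstar * ‖θ₁ - θ₀‖ := by
    refine (le_abs_self _).trans <|
      hconv.norm_image_sub_le_of_norm_fderivWithin_tangentConeAt_le (hdiff yNML) ?_ hθ₀ hθ₁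
    exact fun θ hθ w hw => abs_fderivWithin_apply_le_sqrt_mul_norm (hpos θ hθ) (hsum θ hθ)
      (fun y => hdiff y θ hθ) (hFI θ hθ) (hσ θ hθ) hw yNML
  have hmax : Finset.univ.sup' Finset.univ_nonempty (p θ₀) ≤ p θ₁ yNML :=
    Finset.sup'_le _ _ fun y _ => hdom θ₀ hθ₀ y
  have hK : (1 : ℝ) ≤ Fintype.card Y := mod_cast Fintype.card_pos
  calc (1 - p θ₀ yNML) - (1 - Finset.univ.sup' Finset.univ_nonempty (p θ₀))
      ≤ p θ₁ yNML - p θ₀ yNML := by linarith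
    _ ≤ Real.sqrt σstar * (2 * ρ) := hlip.trans <|
        mul_le_mul_of_nonneg_left (hdiam θ₁ hθ₁ θ₀ hθ₀) (Real.sqrt_nonneg _)
    _ = 2 * ρ * 1 * Real.sqrt σstar := by ring
    _ ≤ 2 * ρ * (Fintype.card Y : ℝ) * Real.sqrt σstar := by gcongr
end
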